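/- arXiv:1402.6170 — 3 statements merged into one kernel-verified Lean document; each statement's English description precedes it below -/
import Mathlib

section
/- Let α > 2 and A > 0, and let f(t) = A·t^α. Then the double integral ∫₁^∞ ∫_t^∞ (r/t)·e^{f(t) − f(r)} dr dt is finite. -/
/-!
For `r ≥ t > 0` and `α ≥ 2` we have `r / t ≤ (r / t)^{α-1} = t^{1-α} r^{α-1}`, while
`A α r^{α-1} e^{A t^α - A r^α}` is the derivative of `-e^{A t^α - A r^α}` and so integrates to `1`
over `(t, ∞)`. Hence the inner integral is at most `t^{1-α} / (A α)`, which is integrable on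
`(1, ∞)` because `α > 2`.
-/

open MeasureTheory Set Filter Topology

lemma lintegral_Ioi_deriv_mul_exp_sub_eq_one {f f' : ℝ → ℝ} {t : ℝ}
    (hf : ∀ r ∈ Ici t, HasDerivAt f (f' r) r) (hf' : ∀ r ∈ Ioi t, 0 ≤ f' r)
    (hf_top : Tendsto f atTop atTop) :
    ∫⁻ r in Ioi t, ENNReal.ofReal (f' r * Real.exp (f t - f r)) = 1 := by
  set G : ℝ → ℝ := fun r => -Real.exp (f t - f r)
  have hG : ∀ r ∈ Ici t, HasDerivAt G (f' r * Real.exp (f t - f r)) r := fun r hr =>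
    (((hf r hr).const_sub (f t)).exp).neg.congr_deriv (by ring)
  have hG_nonneg : ∀ r ∈ Ioi t, 0 ≤ f' r * Real.exp (f t - f r) := fun r hr =>
    mul_nonneg (hf' r hr) (Real.exp_pos _).le
  have hG_lim : Tendsto G atTop (𝓝 0) := by
    simpa [G, sub_eq_add_neg] using (Real.tendsto_exp_atBot.comp
      (tendsto_atBot_add_const_left atTop (f t) (tendsto_neg_atTop_atBot.comp hf_top))).neg
  rw [← ofReal_integral_eq_lintegral_ofReal
      (integrableOn_Ioi_deriv_of_nonneg' hG hG_nonneg hG_lim)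
      ((ae_restrict_iff' measurableSet_Ioi).2 (ae_of_all _ hG_nonneg)),
    integral_Ioi_of_hasDerivAt_of_nonneg' hG hG_nonneg hG_lim]
  simp [G]

lemma div_le_rpow_sub_one_mul_rpow_sub_one {α r t : ℝ} (hα : 2 ≤ α) (ht : 0 < t) (htr : t ≤ r) :
    r / t ≤ t ^ (1 - α) * r ^ (α - 1) := by
  have hrt : 1 ≤ r / t := (one_le_div ht).2 htr
  calc r / t = (r / t) ^ (1 : ℝ) := (Real.rpow_one _).symm
    _ ≤ (r / t) ^ (α - 1) := Real.rpow_le_rpow_of_exponent_le hrt (by linarith)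
    _ = t ^ (1 - α) * r ^ (α - 1) := by
      rw [Real.div_rpow (ht.le.trans htr) ht.le, show 1 - α = -(α - 1) by ring,
        Real.rpow_neg ht.le, div_eq_inv_mul]

lemma lintegral_Ioi_div_mul_exp_sub_rpow_le {α A t : ℝ} (hα : 2 ≤ α) (hA : 0 < A) (ht : 0 < t) :
    ∫⁻ r in Ioi t, ENNReal.ofReal ((r / t) * Real.exp (A * t ^ α - A * r ^ α))
      ≤ ENNReal.ofReal ((A * α)⁻¹ * t ^ (1 - α)) := by
  have hα0 : 0 < α := by linarith
  have hf : ∀ r ∈ Ici t, HasDerivAt (fun x => A * x ^ α) (A * (α * r ^ (α - 1))) r :=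
    fun r hr => (Real.hasDerivAt_rpow_const (Or.inl (ht.trans_le hr).ne')).const_mul A
  have hf' : ∀ r ∈ Ioi t, 0 ≤ A * (α * r ^ (α - 1)) := fun r hr => by
    have := Real.rpow_pos_of_pos (ht.trans hr) (α - 1)
    positivity
  have hf_top : Tendsto (fun x : ℝ => A * x ^ α) atTop atTop :=
    (tendsto_rpow_atTop hα0).const_mul_atTop hA
  set K := (A * α)⁻¹ * t ^ (1 - α)
  have hK : 0 ≤ K := by positivity
  calc ∫⁻ r in Ioi t, ENNReal.ofReal ((r / t) * Real.exp (A * t ^ α - A * r ^ α))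
      ≤ ∫⁻ r in Ioi t, ENNReal.ofReal K *
          ENNReal.ofReal (A * (α * r ^ (α - 1)) * Real.exp (A * t ^ α - A * r ^ α)) := by
        refine setLIntegral_mono' measurableSet_Ioi fun r hr => ?_
        rw [← ENNReal.ofReal_mul hK]
        refine ENNReal.ofReal_le_ofReal ?_
        calc r / t * Real.exp (A * t ^ α - A * r ^ α)
            ≤ t ^ (1 - α) * r ^ (α - 1) * Real.exp (A * t ^ α - A * r ^ α) :=
              mul_le_mul_of_nonneg_right (div_le_rpow_sub_one_mul_rpow_sub_one hα ht (le_of_lt hr))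
                (Real.exp_pos _).le
          _ = K * (A * (α * r ^ (α - 1)) * Real.exp (A * t ^ α - A * r ^ α)) := by
              simp only [K]
              field_simp
    _ = ENNReal.ofReal K := by
        rw [lintegral_const_mul' _ _ ENNReal.ofReal_ne_top,
          lintegral_Ioi_deriv_mul_exp_sub_eq_one hf hf' hf_top, mul_one]

/-- For `α > 2`, `A > 0`, `f t = A t^α`, the double integral
`∫₁^∞ ∫_t^∞ (r/t) e^{f t - f r} dr dt` is finite. -/
theorem double_integral_finite (α A : ℝ) (hα : 2 < α) (hA : 0 < A) :
    (∫⁻ t in Ioi (1:ℝ), ∫⁻ r in Ioi t,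
        ENNReal.ofReal ((r / t) * Real.exp (A * t ^ α - A * r ^ α))) < ⊤ := by
  have hbound : IntegrableOn (fun t : ℝ => (A * α)⁻¹ * t ^ (1 - α)) (Ioi 1) :=
    (integrableOn_Ioi_rpow_of_lt (by linarith) one_pos).const_mul _
  calc (∫⁻ t in Ioi (1:ℝ), ∫⁻ r in Ioi t,
        ENNReal.ofReal ((r / t) * Real.exp (A * t ^ α - A * r ^ α)))
      ≤ ∫⁻ t in Ioi (1:ℝ), ENNReal.ofReal ((A * α)⁻¹ * t ^ (1 - α)) :=
        setLIntegral_mono' measurableSet_Ioi fun t ht =>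
          lintegral_Ioi_div_mul_exp_sub_rpow_le hα.le hA (one_pos.trans ht)
    _ < ⊤ := hbound.lintegral_lt_top
end

section
/- Let A > 0 and f(t) = A·t². Then the double integral ∫₁^∞ ∫_t^∞ (r/t)·e^{f(t) − f(r)} dr dt diverges (equals +∞). -/
/-!
The inner integral is elementary: `r e^{-A r²}` has antiderivative `-e^{-A r²} / (2A)`, so
`∫_t^∞ (r/t) e^{A t² - A r²} dr = 1 / (2 A t)`. The outer integral is then a multiple of the
divergent `∫_1^∞ dt / t`.
-/

open MeasureTheory Set Filter Real Topology

theorem integral_Ioi_mul_exp_neg_mul_sq {b : ℝ} (hb : 0 < b) (t : ℝ) :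
    ∫ r in Ioi t, r * exp (-b * r ^ 2) = exp (-b * t ^ 2) / (2 * b) := by
  have hderiv : ∀ x : ℝ, HasDerivAt (fun r ↦ -exp (-b * r ^ 2) / (2 * b))
      (x * exp (-b * x ^ 2)) x := fun x ↦ by
    refine (((hasDerivAt_pow 2 x).const_mul (-b)).exp.neg.div_const (2 * b)).congr_deriv ?_
    field_simp
    ring
  have hlim : Tendsto (fun r : ℝ ↦ -exp (-b * r ^ 2) / (2 * b)) atTop (𝓝 0) := by
    have hexp := tendsto_exp_atBot.comp
      ((tendsto_pow_atTop two_ne_zero).const_mul_atTop_of_neg (neg_lt_zero.mpr hb))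
    simpa using hexp.neg.div_const (2 * b)
  rw [integral_Ioi_of_hasDerivAt_of_tendsto' (fun x _ ↦ hderiv x)
    (integrable_mul_exp_neg_mul_sq hb).integrableOn hlim]
  ring

theorem lintegral_Ioi_ofReal_div_mul_exp_sub {b t : ℝ} (hb : 0 < b) (ht : 0 < t) :
    ∫⁻ r in Ioi t, ENNReal.ofReal ((r / t) * exp (b * t ^ 2 - b * r ^ 2))
      = ENNReal.ofReal (2 * b * t)⁻¹ := by
  have hsplit : ∀ r : ℝ, (r / t) * exp (b * t ^ 2 - b * r ^ 2)
      = exp (b * t ^ 2) / t * (r * exp (-b * r ^ 2)) := fun r ↦ by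
    rw [sub_eq_add_neg, exp_add, neg_mul]
    ring
  have hnonneg : 0 ≤ᵐ[volume.restrict (Ioi t)]
      fun r ↦ exp (b * t ^ 2) / t * (r * exp (-b * r ^ 2)) :=
    ae_restrict_of_forall_mem measurableSet_Ioi fun r hr ↦ by
      have := ht.trans hr
      positivity
  simp_rw [hsplit]
  rw [← ofReal_integral_eq_lintegral_ofReal
    ((integrable_mul_exp_neg_mul_sq hb).integrableOn.const_mul _) hnonneg,
    integral_const_mul, integral_Ioi_mul_exp_neg_mul_sq hb, neg_mul, exp_neg]
  congr 1
  field_simp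

theorem lintegral_Ioi_ofReal_inv_const_mul_eq_top {a c : ℝ} (ha : 0 ≤ a) (hc : 0 < c) :
    ∫⁻ t in Ioi a, ENNReal.ofReal (c * t)⁻¹ = ⊤ := by
  have hnonneg : 0 ≤ᵐ[volume.restrict (Ioi a)] fun t ↦ (c * t)⁻¹ :=
    ae_restrict_of_forall_mem measurableSet_Ioi fun t ht ↦ by
      have := ha.trans_lt ht
      positivity
  by_contra hfin
  have hint := (lintegral_ofReal_ne_top_iff_integrable (by fun_prop) hnonneg).mp hfin
  refine not_integrableOn_Ioi_inv (a := a) ((hint.const_mul c).congr (ae_of_all _ fun t ↦ ?_))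
  simp only [mul_inv, mul_inv_cancel_left₀ hc.ne']

/-- For `A > 0`, `f t = A t²`, the double integral
`∫₁^∞ ∫_t^∞ (r/t) e^{f t - f r} dr dt` diverges. -/
theorem double_integral_diverges (A : ℝ) (hA : 0 < A) :
    (∫⁻ t in Ioi (1:ℝ), ∫⁻ r in Ioi t,
        ENNReal.ofReal ((r / t) * Real.exp (A * t ^ 2 - A * r ^ 2))) = ⊤ := by
  calc (∫⁻ t in Ioi (1:ℝ), ∫⁻ r in Ioi t,
        ENNReal.ofReal ((r / t) * Real.exp (A * t ^ 2 - A * r ^ 2)))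
      = ∫⁻ t in Ioi (1:ℝ), ENNReal.ofReal (2 * A * t)⁻¹ :=
        setLIntegral_congr_fun measurableSet_Ioi fun t ht ↦
          lintegral_Ioi_ofReal_div_mul_exp_sub hA (one_pos.trans ht)
    _ = ⊤ := lintegral_Ioi_ofReal_inv_const_mul_eq_top zero_le_one (by positivity)
end

section
/- Let α > 2 and R > 0. Then ∫_R^∞ ∫_t^∞ e^{t^α − x^α} dx dt is finite. -/
open MeasureTheory Set

lemma integral_exp_neg_mul_Ioi' {c : ℝ} (hc : 0 < c) (a : ℝ) :
    (∫ x in Ioi a, Real.exp (-(c * x))) = c⁻¹ * Real.exp (-(c * a)) := by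
  have := MeasureTheory.integral_comp_mul_left_Ioi (fun y => Real.exp (-y)) a hc
  simp only [smul_eq_mul] at this
  rw [this, integral_exp_neg_Ioi]

lemma inner_bound {α t : ℝ} (hα : 2 < α) (ht : 0 < t) :
    (∫⁻ x in Ioi t, ENNReal.ofReal (Real.exp (t ^ α - x ^ α)))
      ≤ ENNReal.ofReal ((α * t ^ (α - 1))⁻¹) := by
  set c : ℝ := α * t ^ (α - 1) with hc_def
  have hc : 0 < c := mul_pos (by linarith) (Real.rpow_pos_of_pos ht _)
  have hpt : ∀ x ∈ Ioi t, Real.exp (t ^ α - x ^ α) ≤ Real.exp (c * t - c * x) := by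
    intro x hx
    have hxt : t < x := hx
    apply Real.exp_le_exp.2
    have hs : -1 ≤ (x - t) / t := le_trans (by norm_num) (div_nonneg (by linarith) ht.le)
    have key := one_add_mul_self_le_rpow_one_add hs (by linarith : (1:ℝ) ≤ α)
    have h1 : (1 : ℝ) + (x - t) / t = x / t := by field_simp; ring
    rw [h1] at key
    have h2 : (x / t) ^ α = x ^ α / t ^ α := Real.div_rpow (by linarith : (0:ℝ) ≤ x) ht.le α
    rw [h2] at key
    have htα : (0:ℝ) < t ^ α := Real.rpow_pos_of_pos ht _
    have key2 : (1 + α * ((x - t) / t)) * t ^ α ≤ x ^ α := by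
      rw [le_div_iff₀ htα] at key; exact key
    have h3 : (1 + α * ((x - t) / t)) * t ^ α = t ^ α + c * (x - t) := by
      have : t ^ (α - 1) = t ^ α / t := by
        rw [Real.rpow_sub ht, Real.rpow_one]
      rw [hc_def, this]; field_simp
    rw [h3] at key2
    nlinarith [key2]
  calc (∫⁻ x in Ioi t, ENNReal.ofReal (Real.exp (t ^ α - x ^ α)))
      ≤ ∫⁻ x in Ioi t, ENNReal.ofReal (Real.exp (c * t) * Real.exp (-(c * x))) := by
        apply setLIntegral_mono' measurableSet_Ioi
        intro x hx
        apply ENNReal.ofReal_le_ofReal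
        rw [← Real.exp_add]
        simpa [sub_eq_add_neg] using hpt x hx
    _ = ENNReal.ofReal (∫ x in Ioi t, Real.exp (c * t) * Real.exp (-(c * x))) := by
        rw [MeasureTheory.ofReal_integral_eq_lintegral_ofReal]
        · exact ((exp_neg_integrableOn_Ioi t hc).congr_fun
            (fun x _ => by ring_nf) measurableSet_Ioi).const_mul _
        · exact Filter.Eventually.of_forall fun x => by positivity
    _ = ENNReal.ofReal c⁻¹ := by
        rw [MeasureTheory.integral_const_mul, integral_exp_neg_mul_Ioi' hc,
          ← mul_assoc, mul_comm (Real.exp (c * t)), mul_assoc, ← Real.exp_add]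
        simp

/-- For `α > 2`, `R > 0`, the double integral `∫_R^∞ ∫_t^∞ e^{t^α - x^α} dx dt`
is finite. -/
theorem double_integral_exp_finite (α R : ℝ) (hα : 2 < α) (hR : 0 < R) :
    (∫⁻ t in Ioi R, ∫⁻ x in Ioi t,
        ENNReal.ofReal (Real.exp (t ^ α - x ^ α))) < ⊤ := by
  have hstep : (∫⁻ t in Ioi R, ∫⁻ x in Ioi t,
      ENNReal.ofReal (Real.exp (t ^ α - x ^ α)))
      ≤ ∫⁻ t in Ioi R, ENNReal.ofReal (α⁻¹ * t ^ (-(α - 1))) := by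
    apply setLIntegral_mono' measurableSet_Ioi
    intro t ht
    have ht0 : 0 < t := hR.trans ht
    refine (inner_bound hα ht0).trans_eq ?_
    congr 1
    rw [mul_inv, Real.rpow_neg ht0.le]
  refine hstep.trans_lt ?_
  have hint : IntegrableOn (fun t : ℝ => α⁻¹ * t ^ (-(α - 1))) (Ioi R) :=
    (integrableOn_Ioi_rpow_of_lt (by linarith) hR).const_mul _
  exact hint.setLIntegral_lt_top
end
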